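/- arXiv:1402.5913 — 7 statements merged into one kernel-verified Lean document; each statement's English description precedes it below -/
import Mathlib

section
/- Let w : I → ℕ be a position on a finite index set I, let e ∈ ℕ have the same parity as wt(I), and let i, j ∈ I be distinct indices with w(i) ≥ w(j). Let M⁺ be the position on I∖{j} that agrees with w except that its value at i is w(i)+w(j), and let M⁻ be the position on I∖{j} that agrees with w except that its value at i is w(i)−w(j). Then δ_e(w) = δ_e(M⁺) + (−1)^{w(j)} · δ_e(M⁻). -/
open Finset

/-- The weight of a subposition `S` of the position `w : I → ℕ`. -/
def wtS {I : Type*} [Fintype I] [DecidableEq I] (w : I → ℕ) (S : Finset I) : ℕ :=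
  ∑ i ∈ S, w i

/-- The Saks–Werman statistic `δ_e(w) = ∑_{S ⊆ I, ε(S) ≥ e} (-1)^{wt S}` where
`ε(S) = wt(I \ S) - wt(S)`. -/
def delta {I : Type*} [Fintype I] [DecidableEq I] (w : I → ℕ) (e : ℕ) : ℤ :=
  ∑ S ∈ Finset.univ.filter
      (fun S : Finset I => (e : ℤ) ≤ (wtS w Sᶜ : ℤ) - (wtS w S : ℤ)),
    (-1) ^ (wtS w S)

/-- The iterated statistic `δ_e^(b)`: `δ_e^(1) = δ_e` and for `b ≥ 2`,
`δ_e^(b) = ∑_{t ≥ 0} δ_{e+2t}^(b-1)`, a finite sum since `δ_d = 0` for `d > wt(I)`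
(so summing `t` over `0, …, wt(I)` suffices).  (The value at `b = 0` is junk.) -/
def deltaIt {I : Type*} [Fintype I] [DecidableEq I] (w : I → ℕ) : ℕ → ℕ → ℤ
  | 0, e => delta w e
  | 1, e => delta w e
  | (b+2), e => ∑ t ∈ Finset.range ((∑ i, w i) + 1), deltaIt w (b+1) (e + 2*t)

section SWAux

variable {I : Type*} [Fintype I] [DecidableEq I]

private lemma sum_subtype_ne (j : I) (u : I → ℕ) (S : Finset I) :
    ∑ x ∈ S.subtype (· ≠ j), u ↑x = ∑ y ∈ S.erase j, u y := by
  have h := Finset.sum_map (S.subtype (· ≠ j)) (Function.Embedding.subtype (· ≠ j)) u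
  rw [Finset.subtype_map, Finset.filter_ne'] at h
  exact h.symm

private lemma sum_univ_subtype_ne (j : I) (u : I → ℕ) :
    ∑ x : {x : I // x ≠ j}, u ↑x = ∑ y ∈ (univ : Finset I).erase j, u y := by
  rw [← sum_subtype_ne j u univ]
  apply Finset.sum_congr _ (fun _ _ => rfl)
  ext x; simp

private lemma wt_total (w : I → ℕ) (S : Finset I) :
    wtS w Sᶜ + wtS w S = ∑ i, w i := by
  simpa [wtS] using Finset.sum_compl_add_sum S w

private lemma delta_eq (w : I → ℕ) (e : ℕ) :
    delta w e = ∑ S : Finset I,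
      if (e : ℤ) + 2 * (wtS w S : ℤ) ≤ ((∑ i, w i : ℕ) : ℤ) then (-1 : ℤ) ^ wtS w S else 0 := by
  rw [delta, Finset.sum_filter]
  refine Finset.sum_congr rfl fun S _ => ?_
  have h := wt_total w S
  have hiff : ((e : ℤ) ≤ (wtS w Sᶜ : ℤ) - (wtS w S : ℤ)) ↔
      ((e : ℤ) + 2 * (wtS w S : ℤ) ≤ ((∑ i, w i : ℕ) : ℤ)) := by omega
  simp only [hiff]

private lemma coe_mem_map_subtype {j : I} (T : Finset {x : I // x ≠ j}) (x : {x : I // x ≠ j}) :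
    (x : I) ∈ T.map (Function.Embedding.subtype _) ↔ x ∈ T := by
  simpa [Function.Embedding.coe_subtype] using
    Finset.mem_map' (Function.Embedding.subtype (· ≠ j)) (a := x) (s := T)

private lemma j_notMem_map_subtype {j : I} (T : Finset {x : I // x ≠ j}) :
    j ∉ T.map (Function.Embedding.subtype _) := fun h =>
  (Finset.property_of_mem_map_subtype T h) rfl

end SWAux

/-- Lemma `δ_e(M) = δ_e(M⁺) + (−1)^{w'} δ_e(M⁻)`. -/
theorem delta_eq_delta_plus_add_delta_minus
    {I : Type*} [Fintype I] [DecidableEq I] (w : I → ℕ) (e : ℕ)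
    (hpar : e % 2 = (∑ i, w i) % 2)
    (i j : I) (hij : i ≠ j) (hw : w j ≤ w i) :
    delta w e
      = delta (fun x : {x : I // x ≠ j} => if (x : I) = i then w i + w j else w x) e
        + (-1) ^ (w j) *
          delta (fun x : {x : I // x ≠ j} => if (x : I) = i then w i - w j else w x) e := by
  classical
  set up : I → ℕ := Function.update w i (w i + w j) with hup
  set um : I → ℕ := Function.update w i (w i - w j) with hum
  have hfp : (fun x : {x : I // x ≠ j} => if (x : I) = i then w i + w j else w x)
      = fun x : {x : I // x ≠ j} => up ↑x := by
    funext x; rw [hup, Function.update_apply]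
  have hfm : (fun x : {x : I // x ≠ j} => if (x : I) = i then w i - w j else w x)
      = fun x : {x : I // x ≠ j} => um ↑x := by
    funext x; rw [hum, Function.update_apply]
  rw [hfp, hfm, delta_eq, delta_eq, delta_eq]
  have hiuj : i ∈ (univ : Finset I).erase j := Finset.mem_erase.2 ⟨hij, mem_univ i⟩
  -- totals
  have htotp : (∑ x : {x : I // x ≠ j}, up ↑x) = ∑ k, w k := by
    rw [sum_univ_subtype_ne j up, hup, Finset.sum_update_of_mem hiuj, Finset.sdiff_singleton_eq_erase]
    have h1 : ∑ y ∈ ((univ : Finset I).erase j).erase i, w y + w i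
        = ∑ y ∈ (univ : Finset I).erase j, w y := Finset.sum_erase_add _ _ hiuj
    have h2 : ∑ y ∈ (univ : Finset I).erase j, w y + w j = ∑ y, w y :=
      Finset.sum_erase_add _ _ (mem_univ j)
    omega
  have htotm : (∑ x : {x : I // x ≠ j}, um ↑x) + 2 * w j = ∑ k, w k := by
    rw [sum_univ_subtype_ne j um, hum, Finset.sum_update_of_mem hiuj, Finset.sdiff_singleton_eq_erase]
    have h1 : ∑ y ∈ ((univ : Finset I).erase j).erase i, w y + w i
        = ∑ y ∈ (univ : Finset I).erase j, w y := Finset.sum_erase_add _ _ hiuj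
    have h2 : ∑ y ∈ (univ : Finset I).erase j, w y + w j = ∑ y, w y :=
      Finset.sum_erase_add _ _ (mem_univ j)
    omega
  simp only [htotp]
  rw [Finset.mul_sum]
  rw [← Finset.sum_filter_add_sum_filter_not (univ : Finset (Finset I))
      (fun S => (i ∈ S ↔ j ∈ S))]
  congr 1
  · -- the "+" part
    refine Finset.sum_nbij' (fun S => S.subtype (· ≠ j))
      (fun T => if i ∈ T.map (Function.Embedding.subtype _)
        then insert j (T.map (Function.Embedding.subtype _))
        else T.map (Function.Embedding.subtype _))
      (fun S _ => mem_univ _) ?_ ?_ ?_ ?_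
    · -- maps into the filter
      intro T _
      refine Finset.mem_filter.2 ⟨mem_univ _, ?_⟩
      by_cases hi : i ∈ T.map (Function.Embedding.subtype (· ≠ j))
      · simp [hi]
      · simp [hi, j_notMem_map_subtype T]
    · -- left inverse
      intro S hS
      have hQ : i ∈ S ↔ j ∈ S := (Finset.mem_filter.1 hS).2
      have hmap : (S.subtype (· ≠ j)).map (Function.Embedding.subtype _) = S.erase j := by
        rw [Finset.subtype_map, Finset.filter_ne']
      rw [hmap]
      by_cases hjS : j ∈ S
      · have hiS : i ∈ S := hQ.2 hjS
        rw [if_pos (Finset.mem_erase.2 ⟨hij, hiS⟩), Finset.insert_erase hjS]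
      · have hiS : i ∉ S := fun h => hjS (hQ.1 h)
        rw [Finset.erase_eq_of_notMem hjS, if_neg hiS]
    · -- right inverse
      intro T _
      by_cases hi : i ∈ T.map (Function.Embedding.subtype (· ≠ j))
      · rw [if_pos hi]
        ext x
        simp only [Finset.mem_subtype, Finset.mem_insert, coe_mem_map_subtype]
        exact ⟨fun h => h.resolve_left x.2, Or.inr⟩
      · rw [if_neg hi]
        ext x
        simp only [Finset.mem_subtype, coe_mem_map_subtype]
    · -- values agree
      intro S hS
      have hQ : i ∈ S ↔ j ∈ S := (Finset.mem_filter.1 hS).2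
      have hwt : wtS (fun x : {x : I // x ≠ j} => up ↑x) (S.subtype (· ≠ j)) = wtS w S := by
        show (∑ x ∈ S.subtype (· ≠ j), up ↑x) = wtS w S
        rw [sum_subtype_ne j up S, hup]
        by_cases hjS : j ∈ S
        · have hiS : i ∈ S.erase j := Finset.mem_erase.2 ⟨hij, hQ.2 hjS⟩
          rw [Finset.sum_update_of_mem hiS, Finset.sdiff_singleton_eq_erase]
          have h1 : ∑ y ∈ (S.erase j).erase i, w y + w i = ∑ y ∈ S.erase j, w y :=
            Finset.sum_erase_add _ _ hiS
          have h2 : ∑ y ∈ S.erase j, w y + w j = ∑ y ∈ S, w y :=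
            Finset.sum_erase_add _ _ hjS
          show w i + w j + ∑ y ∈ (S.erase j).erase i, w y = ∑ y ∈ S, w y
          omega
        · have hiS : i ∉ S := fun h => hjS (hQ.1 h)
          rw [Finset.erase_eq_of_notMem hjS,
            Finset.sum_update_of_notMem hiS]
          rfl
      rw [hwt]
  · -- the "−" part
    refine Finset.sum_nbij' (fun S => S.subtype (· ≠ j))
      (fun T => if i ∈ T.map (Function.Embedding.subtype _)
        then T.map (Function.Embedding.subtype _)
        else insert j (T.map (Function.Embedding.subtype _)))
      (fun S _ => mem_univ _) ?_ ?_ ?_ ?_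
    · intro T _
      refine Finset.mem_filter.2 ⟨mem_univ _, ?_⟩
      by_cases hi : i ∈ T.map (Function.Embedding.subtype (· ≠ j))
      · simp [hi, j_notMem_map_subtype T]
      · simp [hi, hij]
    · intro S hS
      have hQ : ¬(i ∈ S ↔ j ∈ S) := (Finset.mem_filter.1 hS).2
      have hmap : (S.subtype (· ≠ j)).map (Function.Embedding.subtype _) = S.erase j := by
        rw [Finset.subtype_map, Finset.filter_ne']
      rw [hmap]
      by_cases hjS : j ∈ S
      · have hiS : i ∉ S := fun h => hQ ⟨fun _ => hjS, fun _ => h⟩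
        have : i ∉ S.erase j := fun h => hiS (Finset.mem_of_mem_erase h)
        rw [if_neg this, Finset.insert_erase hjS]
      · have hiS : i ∈ S := by
          by_contra h
          exact hQ ⟨fun h' => absurd h' h, fun h' => absurd h' hjS⟩
        rw [Finset.erase_eq_of_notMem hjS, if_pos hiS]
    · intro T _
      by_cases hi : i ∈ T.map (Function.Embedding.subtype (· ≠ j))
      · rw [if_pos hi]
        ext x
        simp only [Finset.mem_subtype, coe_mem_map_subtype]
      · rw [if_neg hi]
        ext x
        simp only [Finset.mem_subtype, Finset.mem_insert, coe_mem_map_subtype]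
        exact ⟨fun h => h.resolve_left x.2, Or.inr⟩
    · intro S hS
      have hQ : ¬(i ∈ S ↔ j ∈ S) := (Finset.mem_filter.1 hS).2
      have hwt : wtS (fun x : {x : I // x ≠ j} => um ↑x) (S.subtype (· ≠ j)) + w j
          = wtS w S := by
        show (∑ x ∈ S.subtype (· ≠ j), um ↑x) + w j = wtS w S
        rw [sum_subtype_ne j um S, hum]
        by_cases hjS : j ∈ S
        · have hiS : i ∉ S := fun h => hQ ⟨fun _ => hjS, fun _ => h⟩
          have hiS' : i ∉ S.erase j := fun h => hiS (Finset.mem_of_mem_erase h)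
          rw [Finset.sum_update_of_notMem hiS']
          exact Finset.sum_erase_add _ _ hjS
        · have hiS : i ∈ S := by
            by_contra h
            exact hQ ⟨fun h' => absurd h' h, fun h' => absurd h' hjS⟩
          rw [Finset.erase_eq_of_notMem hjS, Finset.sum_update_of_mem hiS, Finset.sdiff_singleton_eq_erase]
          have h1 : ∑ y ∈ S.erase i, w y + w i = ∑ y ∈ S, w y :=
            Finset.sum_erase_add _ _ hiS
          show w i - w j + ∑ y ∈ S.erase i, w y + w j = ∑ y ∈ S, w y
          omega
      set a : ℕ := wtS (fun x : {x : I // x ≠ j} => um ↑x) (S.subtype (· ≠ j)) with ha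
      have hiff : ((e : ℤ) + 2 * (wtS w S : ℤ) ≤ ((∑ k, w k : ℕ) : ℤ)) ↔
          ((e : ℤ) + 2 * (a : ℤ) ≤ ((∑ x : {x : I // x ≠ j}, um ↑x : ℕ) : ℤ)) := by
        omega
      have hsign : ((-1 : ℤ)) ^ (wtS w S) = (-1) ^ (w j) * (-1) ^ a := by
        rw [← hwt, pow_add]; ring
      rw [mul_ite, mul_zero]
      exact if_congr hiff hsign rfl
end

section
/- Let w : I → ℕ be a position on a finite index set I, let e ∈ ℕ have the same parity as wt(I), let b ≥ 1, and let i, j ∈ I be distinct indices with w(i) ≥ w(j). Let M⁺ be the position on I∖{j} that agrees with w except that its value at i is w(i)+w(j), and let M⁻ be the position on I∖{j} that agrees with w except that its value at i is w(i)−w(j). Then δ_e^(b)(w) = δ_e^(b)(M⁺) + (−1)^{w(j)} · δ_e^(b)(M⁻). -/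
open Finset

section Aux

variable {I : Type*} [Fintype I] [DecidableEq I]

lemma delta_cond (w : I → ℕ) (e : ℕ) (S : Finset I) :
    ((e : ℤ) ≤ (wtS w Sᶜ : ℤ) - (wtS w S : ℤ)) ↔
      ((e : ℤ) ≤ ((∑ x, w x : ℕ) : ℤ) - 2 * (wtS w S : ℤ)) := by
  have h : wtS w Sᶜ + wtS w S = ∑ x, w x := Finset.sum_compl_add_sum S w
  omega

lemma delta_eq_zero (w : I → ℕ) (e : ℕ) (h : ∑ x, w x < e) : delta w e = 0 := by
  rw [delta]
  refine Finset.sum_eq_zero fun S hS => ?_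
  have h2 := (delta_cond w e S).mp (Finset.mem_filter.mp hS).2
  exact absurd h2 (by omega)

lemma deltaIt_eq_zero (w : I → ℕ) : ∀ b e, ∑ x, w x < e → deltaIt w b e = 0
  | 0, e, h => delta_eq_zero w e h
  | 1, e, h => delta_eq_zero w e h
  | (b+2), e, h => by
    rw [deltaIt]
    exact Finset.sum_eq_zero fun t _ => deltaIt_eq_zero w (b+1) (e + 2*t) (by omega)

lemma subtype_map_subtype (j : I) (T : Finset {x : I // x ≠ j}) :
    Finset.subtype (· ≠ j) (T.map (Function.Embedding.subtype _)) = T := by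
  ext x
  simp only [Finset.mem_subtype, Finset.mem_map, Function.Embedding.coe_subtype]
  constructor
  · rintro ⟨a, ha, h⟩
    rwa [← Subtype.ext h]
  · intro h
    exact ⟨x, h, rfl⟩

lemma subtype_insert (j : I) (s : Finset I) :
    Finset.subtype (· ≠ j) (insert j s) = Finset.subtype (· ≠ j) s := by
  ext x
  simp [Finset.mem_subtype, x.prop]

lemma wtS_plus (w : I → ℕ) (i j : I) (hij : i ≠ j) (T : Finset {x : I // x ≠ j}) :
    wtS (fun x : {x : I // x ≠ j} => if (x : I) = i then w i + w j else w x) T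
      = (∑ x ∈ T, w ↑x) + (if ⟨i, hij⟩ ∈ T then w j else 0) := by
  rw [wtS, ← Finset.sum_ite_eq' T ⟨i, hij⟩ (fun _ => w j), ← Finset.sum_add_distrib]
  refine Finset.sum_congr rfl fun x _ => ?_
  by_cases h : (x : I) = i
  · simp [h, Subtype.ext_iff]
  · simp [h, Subtype.ext_iff]

lemma wtS_minus (w : I → ℕ) (i j : I) (hij : i ≠ j) (hw : w j ≤ w i) (T : Finset {x : I // x ≠ j}) :
    wtS (fun x : {x : I // x ≠ j} => if (x : I) = i then w i - w j else w x) T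
      + (if ⟨i, hij⟩ ∈ T then w j else 0)
      = ∑ x ∈ T, w ↑x := by
  rw [wtS, ← Finset.sum_ite_eq' T ⟨i, hij⟩ (fun _ => w j), ← Finset.sum_add_distrib]
  refine Finset.sum_congr rfl fun x _ => ?_
  by_cases h : (x : I) = i
  · rw [if_pos h, if_pos (Subtype.ext h), h]
    omega
  · simp [h, Subtype.ext_iff]

lemma wtS_base (w : I → ℕ) (j : I) (S : Finset I) :
    (∑ x ∈ Finset.subtype (· ≠ j) S, w ↑x) + (if j ∈ S then w j else 0) = wtS w S := by
  have h : ∑ x ∈ Finset.subtype (· ≠ j) S, w ↑x = ∑ x ∈ S.erase j, w x := by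
    rw [← Finset.filter_ne' S j, ← Finset.subtype_map (· ≠ j), Finset.sum_map]
    rfl
  rw [wtS, h]
  by_cases hj : j ∈ S
  · simp [hj, Finset.sum_erase_add S w hj]
  · simp [hj, Finset.erase_eq_of_notMem hj]

lemma total_plus (w : I → ℕ) (i j : I) (hij : i ≠ j) :
    (∑ x : {x : I // x ≠ j}, (if (x : I) = i then w i + w j else w x)) = ∑ x, w x := by
  have h1 := wtS_plus w i j hij Finset.univ
  have h2 := wtS_base w j Finset.univ
  rw [Finset.subtype_univ, if_pos (Finset.mem_univ j)] at h2
  rw [if_pos (Finset.mem_univ _)] at h1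
  show wtS _ Finset.univ = ∑ x, w x
  have h3 : wtS w Finset.univ = ∑ x, w x := rfl
  omega

lemma total_minus (w : I → ℕ) (i j : I) (hij : i ≠ j) (hw : w j ≤ w i) :
    (∑ x : {x : I // x ≠ j}, (if (x : I) = i then w i - w j else w x)) + 2 * w j
      = ∑ x, w x := by
  have h1 := wtS_minus w i j hij hw Finset.univ
  have h2 := wtS_base w j Finset.univ
  rw [Finset.subtype_univ, if_pos (Finset.mem_univ j)] at h2
  rw [if_pos (Finset.mem_univ _)] at h1
  show wtS _ Finset.univ + 2 * w j = ∑ x, w x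
  have h3 : wtS w Finset.univ = ∑ x, w x := rfl
  omega

lemma mem_subtype_i (i j : I) (hij : i ≠ j) (S : Finset I) :
    (⟨i, hij⟩ : {x : I // x ≠ j}) ∈ Finset.subtype (· ≠ j) S ↔ i ∈ S := by
  simp [Finset.mem_subtype]

lemma not_mem_map_j (j : I) (T : Finset {x : I // x ≠ j}) :
    j ∉ T.map (Function.Embedding.subtype _) := by
  simp only [Finset.mem_map, Function.Embedding.coe_subtype]
  rintro ⟨a, _, ha⟩
  exact a.prop ha

lemma mem_map_i (i j : I) (hij : i ≠ j) (T : Finset {x : I // x ≠ j}) :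
    i ∈ T.map (Function.Embedding.subtype _) ↔ (⟨i, hij⟩ : {x : I // x ≠ j}) ∈ T := by
  simp only [Finset.mem_map, Function.Embedding.coe_subtype]
  constructor
  · rintro ⟨a, ha, rfl⟩
    convert ha
  · intro h
    exact ⟨⟨i, hij⟩, h, rfl⟩

lemma sum_map_w (w : I → ℕ) (j : I) (T : Finset {x : I // x ≠ j}) :
    wtS w (T.map (Function.Embedding.subtype _)) = ∑ x ∈ T, w ↑x := by
  rw [wtS, Finset.sum_map]
  rfl

lemma wtS_plus_subtype (w : I → ℕ) (i j : I) (hij : i ≠ j) (S : Finset I) (hQ : i ∈ S ↔ j ∈ S) :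
    wtS (fun x : {x : I // x ≠ j} => if (x : I) = i then w i + w j else w x)
      (Finset.subtype (· ≠ j) S) = wtS w S := by
  have h1 := wtS_plus w i j hij (Finset.subtype (· ≠ j) S)
  have h2 := wtS_base w j S
  simp only [mem_subtype_i i j hij S] at h1
  by_cases hiS : i ∈ S
  · have hjS : j ∈ S := hQ.mp hiS
    rw [if_pos hiS] at h1; rw [if_pos hjS] at h2; omega
  · have hjS : j ∉ S := fun h => hiS (hQ.mpr h)
    rw [if_neg hiS] at h1; rw [if_neg hjS] at h2; omega

lemma wtS_minus_subtype (w : I → ℕ) (i j : I) (hij : i ≠ j) (hw : w j ≤ w i) (S : Finset I)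
    (hQ : ¬(i ∈ S ↔ j ∈ S)) :
    wtS (fun x : {x : I // x ≠ j} => if (x : I) = i then w i - w j else w x)
      (Finset.subtype (· ≠ j) S) + w j = wtS w S := by
  have h1 := wtS_minus w i j hij hw (Finset.subtype (· ≠ j) S)
  have h2 := wtS_base w j S
  simp only [mem_subtype_i i j hij S] at h1
  by_cases hiS : i ∈ S
  · have hjS : j ∉ S := fun h => hQ ⟨fun _ => h, fun _ => hiS⟩
    rw [if_pos hiS] at h1; rw [if_neg hjS] at h2; omega
  · have hjS : j ∈ S := by
      by_contra hjS
      exact hQ ⟨fun h => absurd h hiS, fun h => absurd h hjS⟩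
    rw [if_neg hiS] at h1; rw [if_pos hjS] at h2; omega

lemma part_plus (w : I → ℕ) (i j : I) (e : ℕ) (hij : i ≠ j) :
    ∑ S ∈ (Finset.univ.filter (fun S : Finset I =>
        (e : ℤ) ≤ (wtS w Sᶜ : ℤ) - (wtS w S : ℤ))).filter (fun S => i ∈ S ↔ j ∈ S),
      (-1 : ℤ) ^ (wtS w S)
    = delta (fun x : {x : I // x ≠ j} => if (x : I) = i then w i + w j else w x) e := by
  rw [delta]
  refine Finset.sum_bij' (fun S _ => Finset.subtype (· ≠ j) S)
    (fun T _ => if (⟨i, hij⟩ : {x : I // x ≠ j}) ∈ T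
        then insert j (T.map (Function.Embedding.subtype _))
        else T.map (Function.Embedding.subtype _)) ?_ ?_ ?_ ?_ ?_
  · -- maps into target
    intro S hS
    rw [Finset.mem_filter, Finset.mem_filter] at hS
    obtain ⟨⟨-, hP⟩, hQ⟩ := hS
    have hkey := wtS_plus_subtype w i j hij S hQ
    have hP' := (delta_cond w e S).mp hP
    have htot := total_plus w i j hij
    rw [Finset.mem_filter]
    refine ⟨Finset.mem_univ _, ?_⟩
    beta_reduce
    rw [delta_cond]
    omega
  · -- maps into source
    intro T hT
    rw [Finset.mem_filter] at hT
    have hT2 := (delta_cond _ e T).mp hT.2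
    have htot := total_plus w i j hij
    have hwt := wtS_plus w i j hij T
    by_cases hiT : (⟨i, hij⟩ : {x : I // x ≠ j}) ∈ T
    · rw [if_pos hiT] at hwt
      have hj' := not_mem_map_j j T
      have hkey : wtS w (insert j (T.map (Function.Embedding.subtype _)))
          = (∑ x ∈ T, w ↑x) + w j := by
        rw [wtS, Finset.sum_insert hj', ← wtS, sum_map_w w j T]
        ring
      simp only [if_pos hiT]
      rw [Finset.mem_filter, Finset.mem_filter]
      refine ⟨⟨Finset.mem_univ _, ?_⟩, ?_⟩
      · rw [delta_cond]; omega
      · simp [Finset.mem_insert, (mem_map_i i j hij T).2 hiT]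
    · rw [if_neg hiT] at hwt
      have hkey : wtS w (T.map (Function.Embedding.subtype _)) = ∑ x ∈ T, w ↑x :=
        sum_map_w w j T
      simp only [if_neg hiT]
      rw [Finset.mem_filter, Finset.mem_filter]
      refine ⟨⟨Finset.mem_univ _, ?_⟩, ?_⟩
      · rw [delta_cond]; omega
      · constructor
        · intro h
          exact absurd ((mem_map_i i j hij T).1 h) hiT
        · intro h
          exact absurd h (not_mem_map_j j T)
  · -- left inverse
    intro S hS
    rw [Finset.mem_filter, Finset.mem_filter] at hS
    obtain ⟨⟨-, -⟩, hQ⟩ := hS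
    simp only [mem_subtype_i i j hij S]
    by_cases hiS : i ∈ S
    · have hjS : j ∈ S := hQ.mp hiS
      rw [if_pos hiS, Finset.subtype_map, Finset.filter_ne', Finset.insert_erase hjS]
    · have hjS : j ∉ S := fun h => hiS (hQ.mpr h)
      rw [if_neg hiS, Finset.subtype_map, Finset.filter_ne',
        Finset.erase_eq_of_notMem hjS]
  · -- right inverse
    intro T hT
    by_cases hiT : (⟨i, hij⟩ : {x : I // x ≠ j}) ∈ T
    · simp only [if_pos hiT]
      rw [subtype_insert j _, subtype_map_subtype j _]
    · simp only [if_neg hiT]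
      rw [subtype_map_subtype j _]
  · -- values
    intro S hS
    rw [Finset.mem_filter, Finset.mem_filter] at hS
    rw [wtS_plus_subtype w i j hij S hS.2]

lemma part_minus (w : I → ℕ) (i j : I) (e : ℕ) (hij : i ≠ j) (hw : w j ≤ w i) :
    ∑ S ∈ (Finset.univ.filter (fun S : Finset I =>
        (e : ℤ) ≤ (wtS w Sᶜ : ℤ) - (wtS w S : ℤ))).filter (fun S => ¬(i ∈ S ↔ j ∈ S)),
      (-1 : ℤ) ^ (wtS w S)
    = (-1) ^ (w j) *
        delta (fun x : {x : I // x ≠ j} => if (x : I) = i then w i - w j else w x) e := by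
  rw [delta, Finset.mul_sum]
  refine Finset.sum_bij' (fun S _ => Finset.subtype (· ≠ j) S)
    (fun T _ => if (⟨i, hij⟩ : {x : I // x ≠ j}) ∈ T
        then T.map (Function.Embedding.subtype _)
        else insert j (T.map (Function.Embedding.subtype _))) ?_ ?_ ?_ ?_ ?_
  · intro S hS
    rw [Finset.mem_filter, Finset.mem_filter] at hS
    obtain ⟨⟨-, hP⟩, hQ⟩ := hS
    have hkey := wtS_minus_subtype w i j hij hw S hQ
    have hP' := (delta_cond w e S).mp hP
    have htot := total_minus w i j hij hw
    rw [Finset.mem_filter]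
    refine ⟨Finset.mem_univ _, ?_⟩
    beta_reduce
    rw [delta_cond]
    omega
  · intro T hT
    rw [Finset.mem_filter] at hT
    have hT2 := (delta_cond _ e T).mp hT.2
    have htot := total_minus w i j hij hw
    have hwt := wtS_minus w i j hij hw T
    by_cases hiT : (⟨i, hij⟩ : {x : I // x ≠ j}) ∈ T
    · rw [if_pos hiT] at hwt
      have hkey : wtS w (T.map (Function.Embedding.subtype _)) = ∑ x ∈ T, w ↑x :=
        sum_map_w w j T
      simp only [if_pos hiT]
      rw [Finset.mem_filter, Finset.mem_filter]
      refine ⟨⟨Finset.mem_univ _, ?_⟩, ?_⟩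
      · rw [delta_cond]; omega
      · intro hQ
        exact absurd (hQ.mp ((mem_map_i i j hij T).2 hiT)) (not_mem_map_j j T)
    · rw [if_neg hiT] at hwt
      have hj' := not_mem_map_j j T
      have hkey : wtS w (insert j (T.map (Function.Embedding.subtype _)))
          = (∑ x ∈ T, w ↑x) + w j := by
        rw [wtS, Finset.sum_insert hj', ← wtS, sum_map_w w j T]
        ring
      simp only [if_neg hiT]
      rw [Finset.mem_filter, Finset.mem_filter]
      refine ⟨⟨Finset.mem_univ _, ?_⟩, ?_⟩
      · rw [delta_cond]; omega
      · intro hQ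
        have hjin : j ∈ insert j (T.map (Function.Embedding.subtype _)) :=
          Finset.mem_insert_self _ _
        have hiin := hQ.mpr hjin
        rw [Finset.mem_insert] at hiin
        rcases hiin with h | h
        · exact hij h
        · exact hiT ((mem_map_i i j hij T).1 h)
  · intro S hS
    rw [Finset.mem_filter, Finset.mem_filter] at hS
    obtain ⟨⟨-, -⟩, hQ⟩ := hS
    simp only [mem_subtype_i i j hij S]
    by_cases hiS : i ∈ S
    · have hjS : j ∉ S := fun h => hQ ⟨fun _ => h, fun _ => hiS⟩
      rw [if_pos hiS, Finset.subtype_map, Finset.filter_ne',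
        Finset.erase_eq_of_notMem hjS]
    · have hjS : j ∈ S := by
        by_contra hjS
        exact hQ ⟨fun h => absurd h hiS, fun h => absurd h hjS⟩
      rw [if_neg hiS, Finset.subtype_map, Finset.filter_ne', Finset.insert_erase hjS]
  · intro T hT
    by_cases hiT : (⟨i, hij⟩ : {x : I // x ≠ j}) ∈ T
    · simp only [if_pos hiT]
      rw [subtype_map_subtype j _]
    · simp only [if_neg hiT]
      rw [subtype_insert j _, subtype_map_subtype j _]
  · intro S hS
    rw [Finset.mem_filter, Finset.mem_filter] at hS
    have hkey := wtS_minus_subtype w i j hij hw S hS.2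
    rw [← pow_add, ← hkey, add_comm]

lemma delta_split (w : I → ℕ) (i j : I) (e : ℕ) (hij : i ≠ j) (hw : w j ≤ w i) :
    delta w e
      = delta (fun x : {x : I // x ≠ j} => if (x : I) = i then w i + w j else w x) e
        + (-1) ^ (w j) *
          delta (fun x : {x : I // x ≠ j} => if (x : I) = i then w i - w j else w x) e := by
  rw [delta,
    ← Finset.sum_filter_add_sum_filter_not (Finset.univ.filter (fun S : Finset I =>
      (e : ℤ) ≤ (wtS w Sᶜ : ℤ) - (wtS w S : ℤ))) (fun S => i ∈ S ↔ j ∈ S),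
    part_plus w i j e hij, part_minus w i j e hij hw]

lemma deltaIt_split (w : I → ℕ) (i j : I) (hij : i ≠ j) (hw : w j ≤ w i) :
    ∀ b e, deltaIt w b e
      = deltaIt (fun x : {x : I // x ≠ j} => if (x : I) = i then w i + w j else w x) b e
        + (-1) ^ (w j) *
          deltaIt (fun x : {x : I // x ≠ j} => if (x : I) = i then w i - w j else w x) b e
  | 0, e => delta_split w i j e hij hw
  | 1, e => delta_split w i j e hij hw
  | (b+2), e => by
    set wp : {x : I // x ≠ j} → ℕ := fun x => if (x : I) = i then w i + w j else w x
    set wm : {x : I // x ≠ j} → ℕ := fun x => if (x : I) = i then w i - w j else w x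
    have htotp : (∑ x, wp x) = ∑ x, w x := total_plus w i j hij
    have htotm : (∑ x, wm x) + 2 * w j = ∑ x, w x := total_minus w i j hij hw
    rw [deltaIt, deltaIt, deltaIt, htotp]
    have hsub : ∑ t ∈ Finset.range ((∑ x, wm x) + 1), deltaIt wm (b+1) (e + 2*t)
        = ∑ t ∈ Finset.range ((∑ x, w x) + 1), deltaIt wm (b+1) (e + 2*t) := by
      refine Finset.sum_subset (Finset.range_subset_range.2 (by omega)) ?_
      intro t _ ht
      rw [Finset.mem_range, not_lt] at ht
      exact deltaIt_eq_zero wm (b+1) (e + 2*t) (by omega)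
    rw [hsub, Finset.mul_sum, ← Finset.sum_add_distrib]
    exact Finset.sum_congr rfl fun t _ => deltaIt_split w i j hij hw (b+1) (e + 2*t)

end Aux

/-- `δ_e^(b)(M) = δ_e^(b)(M⁺) + (−1)^{w'} δ_e^(b)(M⁻)` for `b ≥ 1`. -/
theorem deltaIt_eq_deltaIt_plus_add_deltaIt_minus
    {I : Type*} [Fintype I] [DecidableEq I] (w : I → ℕ) (e b : ℕ)
    (hpar : e % 2 = (∑ i, w i) % 2) (hb : 1 ≤ b)
    (i j : I) (hij : i ≠ j) (hw : w j ≤ w i) :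
    deltaIt w b e
      = deltaIt (fun x : {x : I // x ≠ j} => if (x : I) = i then w i + w j else w x) b e
        + (-1) ^ (w j) *
          deltaIt (fun x : {x : I // x ≠ j} => if (x : I) = i then w i - w j else w x) b e :=
  deltaIt_split w i j hij hw b e
end

section
/- Let n = 2s + e with s ∈ ℕ and e ≥ 1, and let w : I → ℕ be the position on an index set I of size n with w(i) = 1 for every i ∈ I (the starting position). Then for every b ∈ ℕ with 1 ≤ b ≤ n, δ_e^(b)(w) = (−1)^s · C(n−b, s), where C denotes the binomial coefficient. -/
open Finset

lemma alt_sum_choose (m s : ℕ) (hm : 1 ≤ m) :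
    ∑ k ∈ Finset.range (s+1), (-1:ℤ)^k * (m.choose k : ℤ)
      = (-1:ℤ)^s * ((m-1).choose s : ℤ) := by
  induction s with
  | zero => simp
  | succ s ih =>
    rw [Finset.sum_range_succ, ih]
    obtain ⟨m', rfl⟩ : ∃ m', m = m' + 1 := ⟨m-1, by omega⟩
    rw [Nat.succ_sub_one, Nat.choose_succ_succ]
    push_cast [Nat.choose_succ_succ]
    ring

lemma wtS_ones {I : Type*} [Fintype I] [DecidableEq I] (w : I → ℕ)
    (hw : ∀ i, w i = 1) (S : Finset I) : wtS w S = S.card := by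
  simp [wtS, hw]

lemma delta_ones {I : Type*} [Fintype I] [DecidableEq I] (n : ℕ)
    (hcard : Fintype.card I = n) (w : I → ℕ) (hw : ∀ i, w i = 1) (d : ℕ) :
    delta w d = ∑ k ∈ Finset.range (n+1),
      if d + 2*k ≤ n then (-1:ℤ)^k * (n.choose k : ℤ) else 0 := by
  rw [delta, Finset.sum_filter, ← Finset.powerset_univ,
    Finset.sum_powerset, Finset.card_univ, hcard]
  refine Finset.sum_congr rfl fun k hk => ?_
  have hk' : k ≤ n := by simp at hk; omega
  have : ∀ S ∈ (univ : Finset I).powersetCard k,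
      (if (d:ℤ) ≤ (wtS w Sᶜ : ℤ) - (wtS w S : ℤ) then ((-1:ℤ)^(wtS w S)) else 0)
        = (if d + 2*k ≤ n then (-1:ℤ)^k else 0) := by
    intro S hS
    have hc : S.card = k := (Finset.mem_powersetCard.mp hS).2
    have h1 : wtS w S = k := by rw [wtS_ones w hw, hc]
    have h2 : wtS w Sᶜ = n - k := by
      rw [wtS_ones w hw, Finset.card_compl, hc, hcard]
    rw [h1, h2]
    congr 1
    simp only [eq_iff_iff]
    constructor <;> intro h
    · omega
    · omega
  rw [Finset.sum_congr rfl this, Finset.sum_const, Finset.card_powersetCard,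
    Finset.card_univ, hcard]
  split <;> simp [mul_comm]

lemma delta_ones_big {I : Type*} [Fintype I] [DecidableEq I] (n : ℕ)
    (hcard : Fintype.card I = n) (w : I → ℕ) (hw : ∀ i, w i = 1) (d : ℕ)
    (hd : n < d) : delta w d = 0 := by
  rw [delta_ones n hcard w hw]
  refine Finset.sum_eq_zero fun k _ => ?_
  rw [if_neg (by omega)]

lemma deltaIt_big {I : Type*} [Fintype I] [DecidableEq I] (n : ℕ)
    (hcard : Fintype.card I = n) (w : I → ℕ) (hw : ∀ i, w i = 1) (b d : ℕ)
    (hd : n < d) : deltaIt w b d = 0 := by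
  induction b using Nat.twoStepInduction generalizing d with
  | zero => exact delta_ones_big n hcard w hw d hd
  | one => exact delta_ones_big n hcard w hw d hd
  | more b ih ih2 =>
    rw [deltaIt]
    exact Finset.sum_eq_zero fun t _ => ih2 _ (by omega)

/-- for the starting position (all weights `1`) on an index set of size
`n = 2s + e` and any `1 ≤ b ≤ n`, one has `δ_e^(b) = (−1)^s · C(n−b, s)`. -/
theorem deltaIt_start
    {I : Type*} [Fintype I] [DecidableEq I] (n s e b : ℕ)
    (hn : n = 2 * s + e) (he : 1 ≤ e)
    (hcard : Fintype.card I = n)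
    (w : I → ℕ) (hw : ∀ i, w i = 1)
    (hb1 : 1 ≤ b) (hbn : b ≤ n) :
    deltaIt w b e = (-1) ^ s * ((n - b).choose s : ℤ) := by
  induction b using Nat.twoStepInduction generalizing s e with
  | zero => omega
  | one =>
    show delta w e = _
    rw [delta_ones n hcard w hw]
    have hsn : s + 1 ≤ n + 1 := by omega
    rw [← Finset.sum_subset (Finset.range_subset_range.mpr hsn)
      (fun k hk hk2 => by rw [if_neg]; simp at hk hk2 ⊢; omega)]
    rw [Finset.sum_congr rfl
      (fun k hk => if_pos (by simp at hk; omega))]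
    rw [alt_sum_choose n s (by omega)]
  | more b ih ih2 =>
    rw [deltaIt]
    have hsum : (∑ i, w i) = n := by
      simp only [hw]
      simp [hcard]
    rw [hsum]
    have hterm : ∀ t ∈ Finset.range (n+1), deltaIt w (b+1) (e + 2*t) =
        if t ≤ s then (-1:ℤ)^(s-t) * ((n-(b+1)).choose (s-t) : ℤ) else 0 := by
      intro t ht
      by_cases hts : t ≤ s
      · rw [if_pos hts]
        exact ih2 (s-t) (e+2*t) (by omega) (by omega) (by omega) (by omega)
      · rw [if_neg hts]
        exact deltaIt_big n hcard w hw _ _ (by omega)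
    rw [Finset.sum_congr rfl hterm]
    have hsn : s + 1 ≤ n + 1 := by omega
    rw [← Finset.sum_subset (Finset.range_subset_range.mpr hsn)
      (fun k hk hk2 => by rw [if_neg]; simp at hk hk2 ⊢; omega)]
    rw [Finset.sum_congr rfl
      (fun k hk => if_pos (by simp at hk; omega))]
    have hrefl := Finset.sum_range_reflect
      (fun j => (-1:ℤ)^j * ((n-(b+1)).choose j : ℤ)) (s+1)
    simp only [Nat.add_sub_cancel] at hrefl
    rw [hrefl, alt_sum_choose (n-(b+1)) s (by omega)]
    congr 2
end

section
/- Let n = 2s + e with s ≥ 1 and e ≥ 1 and e ≤ n, and let w : I → ℕ be the position on an index set I of size n with w(i) = 1 for every i ∈ I (the starting position). Then the 2-adic valuation of δ_e^(e)(w) equals B(s), the number of ones in the binary expansion of s; equivalently SW_e(w) = e + B(s). -/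
open Finset

/-- `B m` is the number of ones in the binary expansion of `m`. -/
def binaryWeight (m : ℕ) : ℕ := (Nat.digits 2 m).count 1

/-!
For the all-ones position `wt S = #S`, so `δ_d` is a partial alternating sum of the binomial
coefficients `C(n, k)` over `d + 2k ≤ n`. Such a partial sum telescopes to a single binomial
coefficient, `∑_{j ≤ m} (-1)^j C(N+1, j) = (-1)^m C(N, m)`, and each further iteration of
`δ^(b)` again sums (after reflecting the index) consecutive terms of this shape, lowering the
upper index by one. Hence `δ_{e+2u}^(b) = (-1)^(s-u) C(n-b, s-u)`, and in particular
`δ_e^(e) = ± C(2s, s)`, whose 2-adic valuation is `B(s)` by Kummer's theorem: adding `s` to itself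
in base 2 carries once for each binary digit `1` of `s`.
-/

theorem List.count_one_eq_sum_of_forall_lt_two {l : List ℕ} (h : ∀ x ∈ l, x < 2) :
    l.count 1 = l.sum := by
  induction l with
  | nil => simp
  | cons a t ih =>
    have ha : a < 2 := h a (by simp)
    have ht : t.count 1 = t.sum := ih fun x hx => h x (by simp [hx])
    interval_cases a <;> simp [ht, add_comm]

theorem binaryWeight_eq_sum_digits (m : ℕ) : binaryWeight m = (Nat.digits 2 m).sum :=
  List.count_one_eq_sum_of_forall_lt_two fun _ hx => Nat.digits_lt_base (by norm_num) hx

theorem sum_digits_two_mul (m : ℕ) : (Nat.digits 2 (2 * m)).sum = (Nat.digits 2 m).sum := by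
  rcases m.eq_zero_or_pos with rfl | hm
  · rfl
  · simp [Nat.digits_base_mul (by norm_num : 1 < 2) hm]

theorem padicValNat_two_centralBinom (s : ℕ) :
    padicValNat 2 s.centralBinom = binaryWeight s := by
  have kummer := sub_one_mul_padicValNat_choose_eq_sub_sum_digits' (p := 2) (k := s) (n := s)
  have hdigits := sum_digits_two_mul s
  rw [two_mul] at hdigits
  rw [Nat.centralBinom_eq_two_mul_choose, binaryWeight_eq_sum_digits, two_mul]
  omega

theorem emultiplicity_two_neg_one_pow_mul_centralBinom (s : ℕ) :
    emultiplicity (2 : ℤ) ((-1) ^ s * s.centralBinom) = binaryWeight s := by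
  have : Fact (Nat.Prime 2) := ⟨Nat.prime_two⟩
  have hsign : emultiplicity (2 : ℤ) ((-1) ^ s * s.centralBinom)
      = emultiplicity ((2 : ℕ) : ℤ) (s.centralBinom : ℤ) := by
    rcases neg_one_pow_eq_or ℤ s with h | h <;> simp [h, emultiplicity_neg]
  rw [hsign, Int.natCast_emultiplicity, ← padicValNat_eq_emultiplicity (Nat.centralBinom_ne_zero s),
    padicValNat_two_centralBinom]

theorem Finset.range_filter_add_le {M s u : ℕ} (hs : s ≤ M) :
    (range (M + 1)).filter (fun t => u + t ≤ s) = if u ≤ s then range (s - u + 1) else ∅ := by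
  ext t
  split_ifs <;> simp only [mem_filter, mem_range, notMem_empty, iff_false] <;> omega

section

variable {I : Type*} [Fintype I] [DecidableEq I]

theorem deltaIt_one (w : I → ℕ) (d : ℕ) : deltaIt w 1 d = delta w d :=
  rfl

theorem deltaIt_succ (w : I → ℕ) {b : ℕ} (hb : 1 ≤ b) (d : ℕ) :
    deltaIt w (b + 1) d = ∑ t ∈ range ((∑ i, w i) + 1), deltaIt w b (d + 2 * t) := by
  obtain ⟨c, rfl⟩ := Nat.exists_eq_add_of_le' hb
  rfl

variable {w : I → ℕ}

theorem wtS_of_forall_eq_one (hw : ∀ i, w i = 1) (S : Finset I) : wtS w S = #S := by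
  simp [wtS, hw]

theorem sum_of_forall_eq_one (hw : ∀ i, w i = 1) : ∑ i, w i = Fintype.card I :=
  wtS_of_forall_eq_one hw univ

theorem delta_of_forall_eq_one (hw : ∀ i, w i = 1) (d : ℕ) :
    delta w d = ∑ k ∈ (range (Fintype.card I + 1)).filter (fun k => d + 2 * k ≤ Fintype.card I),
      (-1) ^ k * ((Fintype.card I).choose k : ℤ) := by
  have hcond : ∀ S : Finset I,
      (d : ℤ) ≤ (wtS w Sᶜ : ℤ) - wtS w S ↔ d + 2 * #S ≤ Fintype.card I := by
    intro S
    rw [wtS_of_forall_eq_one hw, wtS_of_forall_eq_one hw, card_compl,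
      Nat.cast_sub (card_le_univ S)]
    omega
  unfold delta
  simp_rw [hcond, wtS_of_forall_eq_one hw, sum_filter, ← powerset_univ]
  rw [sum_powerset_apply_card (f := fun k => if d + 2 * k ≤ Fintype.card I then (-1 : ℤ) ^ k else 0),
    card_univ]
  refine sum_congr rfl fun k _ => ?_
  split_ifs <;> simp [mul_comm]

theorem deltaIt_add_two_mul_of_forall_eq_one (hw : ∀ i, w i = 1) {s e b : ℕ}
    (hcard : Fintype.card I = 2 * s + e) (hb : 1 ≤ b) (hbn : b ≤ 2 * s + e) (u : ℕ) :
    deltaIt w b (e + 2 * u) =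
      if u ≤ s then (-1) ^ (s - u) * ((2 * s + e - b).choose (s - u) : ℤ) else 0 := by
  induction b, hb using Nat.le_induction generalizing u with
  | base =>
    have hrange : ((range (2 * s + e + 1)).filter fun k => e + 2 * u + 2 * k ≤ 2 * s + e)
        = (range (2 * s + e + 1)).filter fun k => u + k ≤ s :=
      filter_congr fun k _ => by omega
    rw [deltaIt_one, delta_of_forall_eq_one hw, hcard, hrange, range_filter_add_le (by omega)]
    split_ifs
    · obtain ⟨N, hN⟩ : ∃ N, 2 * s + e = N + 1 := ⟨2 * s + e - 1, by omega⟩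
      rw [hN, Int.alternating_sum_range_choose_eq_choose, Nat.add_sub_cancel]
    · rfl
  | succ b hb ih =>
    obtain ⟨N, hN⟩ : ∃ N, 2 * s + e - b = N + 1 := ⟨2 * s + e - (b + 1), by omega⟩
    have hterm : ∀ t, deltaIt w b (e + 2 * u + 2 * t) =
        if u + t ≤ s then (-1) ^ (s - (u + t)) * ((N + 1).choose (s - (u + t)) : ℤ) else 0 :=
      fun t => by rw [add_assoc, ← mul_add, ih (by omega), hN]
    rw [deltaIt_succ w hb, sum_of_forall_eq_one hw, hcard, show 2 * s + e - (b + 1) = N by omega]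
    simp_rw [hterm]
    rw [← sum_filter, range_filter_add_le (by omega)]
    split_ifs
    · -- reflecting `t ↦ s - u - t` turns the sum into a partial alternating sum
      calc ∑ t ∈ range (s - u + 1), (-1) ^ (s - (u + t)) * ((N + 1).choose (s - (u + t)) : ℤ)
          = ∑ j ∈ range (s - u + 1), (-1) ^ j * ((N + 1).choose j : ℤ) := by
            rw [← sum_range_reflect]
            refine sum_congr rfl fun t ht => ?_
            rw [mem_range] at ht
            congr 3 <;> omega
        _ = (-1) ^ (s - u) * (N.choose (s - u) : ℤ) := Int.alternating_sum_range_choose_eq_choose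
    · rfl

end

theorem emultiplicity_deltaIt_start_general
    {I : Type*} [Fintype I] [DecidableEq I] (n s e : ℕ)
    (hn : n = 2 * s + e) (he : 1 ≤ e)
    (hcard : Fintype.card I = n)
    (w : I → ℕ) (hw : ∀ i, w i = 1) :
    emultiplicity (2 : ℤ) (deltaIt w e e) = (binaryWeight s : ℕ∞) := by
  subst hn
  have hclosed := deltaIt_add_two_mul_of_forall_eq_one hw hcard he (by omega) 0
  rw [mul_zero, add_zero, if_pos (Nat.zero_le s), Nat.sub_zero, Nat.add_sub_cancel,
    ← Nat.centralBinom_eq_two_mul_choose] at hclosed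
  rw [hclosed, emultiplicity_two_neg_one_pow_mul_centralBinom]

/-- for the starting position on `n = 2s + e` balls (`s, e ≥ 1`, `e ≤ n`) the
2-adic valuation of `δ_e^(e)` equals `B(s)`; equivalently `SW_e = e + B(s)`. -/
theorem emultiplicity_deltaIt_start
    {I : Type*} [Fintype I] [DecidableEq I] (n s e : ℕ)
    (hn : n = 2 * s + e) (hs : 1 ≤ s) (he : 1 ≤ e) (hen : e ≤ n)
    (hcard : Fintype.card I = n)
    (w : I → ℕ) (hw : ∀ i, w i = 1) :
    emultiplicity (2 : ℤ) (deltaIt w e e) = (binaryWeight s : ℕ∞) :=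
  emultiplicity_deltaIt_start_general n s e hn he hcard w hw
end

section
/- Let w : I → ℕ be a position on a finite index set I with wt(I) = 2s + e, where s ∈ ℕ and e ≥ 1. Then for every b ≥ 1, δ_e^(b)(w) = Σ_{r=0}^{s} C(s+b−1−r, b−1) · (−1)^r · α_r(w), where C denotes the binomial coefficient. -/
open Finset

/-- `α_r(w)` is the number of subpositions `S ⊆ I` with `wt(S) = r`. -/
def alpha {I : Type*} [Fintype I] [DecidableEq I] (w : I → ℕ) (r : ℕ) : ℕ :=
  (Finset.univ.filter (fun S : Finset I => wtS w S = r)).card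

lemma sum_compl_wtS {I : Type*} [Fintype I] [DecidableEq I] (w : I → ℕ) (S : Finset I) :
    wtS w Sᶜ + wtS w S = ∑ i, w i :=
  Finset.sum_compl_add_sum S w

lemma delta_eq_sum_alpha {I : Type*} [Fintype I] [DecidableEq I] (w : I → ℕ) (s e : ℕ)
    (hwt : ∑ i, w i = 2 * s + e) (he : 1 ≤ e) :
    delta w e = ∑ r ∈ Finset.range (s + 1), (-1) ^ r * (alpha w r : ℤ) := by
  have hfil : (Finset.univ.filter
      (fun S : Finset I => (e : ℤ) ≤ (wtS w Sᶜ : ℤ) - (wtS w S : ℤ)))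
      = Finset.univ.filter (fun S : Finset I => wtS w S ≤ s) := by
    apply Finset.filter_congr
    intro S _
    have h := sum_compl_wtS w S
    rw [hwt] at h
    constructor
    · intro hle; omega
    · intro hle
      have : wtS w S ≤ s := by exact_mod_cast hle
      omega
  rw [delta, hfil]
  rw [← Finset.sum_fiberwise_of_maps_to (g := wtS w) (t := Finset.range (s + 1))
    (by intro S hS; simp only [Finset.mem_filter] at hS; simp [Finset.mem_range]; omega)]
  refine Finset.sum_congr rfl fun r hr => ?_
  have hr' : r ≤ s := by simpa [Nat.lt_succ_iff] using hr
  have hset : ((Finset.univ.filter (fun S : Finset I => wtS w S ≤ s)).filter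
      (fun S => wtS w S = r)) = Finset.univ.filter (fun S : Finset I => wtS w S = r) := by
    ext S; simp only [Finset.mem_filter, Finset.mem_univ, true_and]
    constructor
    · rintro ⟨_, h⟩; exact h
    · intro h; exact ⟨by omega, h⟩
  rw [hset]
  have hconst : ∑ S ∈ Finset.univ.filter (fun S : Finset I => wtS w S = r),
      ((-1 : ℤ) ^ wtS w S)
      = ∑ _S ∈ Finset.univ.filter (fun S : Finset I => wtS w S = r), ((-1 : ℤ) ^ r) :=
    Finset.sum_congr rfl fun S hS => by
      simp only [Finset.mem_filter] at hS; rw [hS.2]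
  rw [hconst, Finset.sum_const, alpha]
  simp [mul_comm]

lemma delta_vanish {I : Type*} [Fintype I] [DecidableEq I] (w : I → ℕ) (e : ℕ)
    (h : ∑ i, w i < e) : delta w e = 0 := by
  rw [delta, Finset.filter_false_of_mem, Finset.sum_empty]
  intro S _
  have hc := sum_compl_wtS w S
  intro hle
  have : (wtS w Sᶜ : ℤ) - wtS w S ≤ wtS w Sᶜ := by
    have : (0 : ℤ) ≤ wtS w S := Int.natCast_nonneg _
    omega
  have h2 : (e : ℤ) ≤ wtS w Sᶜ := le_trans hle this
  have : wtS w Sᶜ ≤ ∑ i, w i := by omega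
  have : e ≤ wtS w Sᶜ := by exact_mod_cast h2
  omega

lemma deltaIt_vanish {I : Type*} [Fintype I] [DecidableEq I] (w : I → ℕ) :
    ∀ b e, (∑ i, w i) < e → deltaIt w b e = 0
  | 0, e, h => delta_vanish w e h
  | 1, e, h => delta_vanish w e h
  | (b+2), e, h => by
      rw [deltaIt]
      exact Finset.sum_eq_zero fun t _ => deltaIt_vanish w (b+1) (e + 2*t) (by omega)

lemma hockey (b : ℕ) : ∀ m : ℕ,
    ∑ t ∈ Finset.range (m + 1), (m + b - t).choose b = (m + b + 1).choose (b + 1) := by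
  intro m
  induction m with
  | zero => simp
  | succ m ih =>
    rw [Finset.sum_range_succ']
    have h1 : ∀ t ∈ Finset.range (m + 1), (m + 1 + b - (t + 1)).choose b
        = (m + b - t).choose b := by
      intro t ht
      congr 1
      omega
    rw [Finset.sum_congr rfl h1, ih]
    have : m + 1 + b - 0 = m + b + 1 := by omega
    rw [this, show m + 1 + b + 1 = (m + b + 1) + 1 from by omega,
      Nat.choose_succ_succ' (m + b + 1) b]
    omega

lemma triangle_swap {M : Type*} [AddCommMonoid M] (s : ℕ) (f : ℕ → ℕ → M) :
    ∑ t ∈ Finset.range (s + 1), ∑ r ∈ Finset.range (s - t + 1), f t r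
      = ∑ r ∈ Finset.range (s + 1), ∑ t ∈ Finset.range (s - r + 1), f t r := by
  have h : ∀ a ∈ Finset.range (s + 1),
      Finset.range (s - a + 1) = (Finset.range (s + 1)).filter (fun x => a + x ≤ s) := by
    intro a ha
    have ha' : a ≤ s := by simpa [Nat.lt_succ_iff] using ha
    ext x
    simp only [Finset.mem_range, Finset.mem_filter]
    omega
  calc ∑ t ∈ Finset.range (s + 1), ∑ r ∈ Finset.range (s - t + 1), f t r
      = ∑ t ∈ Finset.range (s + 1), ∑ r ∈ Finset.range (s + 1),
          if t + r ≤ s then f t r else 0 := by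
        refine Finset.sum_congr rfl fun t ht => ?_
        rw [h t ht, Finset.sum_filter]
    _ = ∑ r ∈ Finset.range (s + 1), ∑ t ∈ Finset.range (s + 1),
          if t + r ≤ s then f t r else 0 := Finset.sum_comm
    _ = ∑ r ∈ Finset.range (s + 1), ∑ t ∈ Finset.range (s - r + 1), f t r := by
        refine Finset.sum_congr rfl fun r hr => ?_
        rw [h r hr, Finset.sum_filter]
        refine Finset.sum_congr rfl fun t _ => ?_
        simp [Nat.add_comm]

lemma deltaIt_succ_eq {I : Type*} [Fintype I] [DecidableEq I] (w : I → ℕ) :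
    ∀ b s e, (∑ i, w i = 2 * s + e) → 1 ≤ e →
    deltaIt w (b + 1) e
      = ∑ r ∈ Finset.range (s + 1),
          ((s + b - r).choose b : ℤ) * (-1) ^ r * (alpha w r : ℤ) := by
  intro b
  induction b with
  | zero =>
    intro s e hwt he
    show delta w e = _
    rw [delta_eq_sum_alpha w s e hwt he]
    refine Finset.sum_congr rfl fun r hr => ?_
    have hr' : r ≤ s := by simpa [Nat.lt_succ_iff] using hr
    simp
  | succ b ih =>
    intro s e hwt he
    rw [show b + 1 + 1 = b + 2 from rfl, deltaIt]
    have hsub : Finset.range (s + 1) ⊆ Finset.range ((∑ i, w i) + 1) := by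
      apply Finset.range_subset_range.mpr; omega
    rw [← Finset.sum_subset hsub (fun t _ hnt => by
      apply deltaIt_vanish
      simp only [Finset.mem_range, Nat.lt_succ_iff, not_le] at hnt
      omega)]
    have hstep : ∀ t ∈ Finset.range (s + 1),
        deltaIt w (b + 1) (e + 2 * t)
          = ∑ r ∈ Finset.range (s - t + 1),
              ((s - t + b - r).choose b : ℤ) * (-1) ^ r * (alpha w r : ℤ) := by
      intro t ht
      have ht' : t ≤ s := by simpa [Nat.lt_succ_iff] using ht
      exact ih (s - t) (e + 2 * t) (by omega) (by omega)
    rw [Finset.sum_congr rfl hstep]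
    rw [triangle_swap s (fun t r => ((s - t + b - r).choose b : ℤ) * (-1) ^ r * (alpha w r : ℤ))]
    refine Finset.sum_congr rfl fun r hr => ?_
    have hr' : r ≤ s := by simpa [Nat.lt_succ_iff] using hr
    rw [← Finset.sum_mul, ← Finset.sum_mul]
    congr 1
    congr 1
    have hco : ∀ t ∈ Finset.range (s - r + 1),
        ((s - t + b - r).choose b : ℤ) = (((s - r) + b - t).choose b : ℤ) := by
      intro t ht
      have ht' : t ≤ s - r := by simpa [Nat.lt_succ_iff] using ht
      have : s - t + b - r = s - r + b - t := by omega
      rw [this]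
    rw [Finset.sum_congr rfl hco]
    rw [← Nat.cast_sum, hockey b (s - r)]
    have : s + (b + 1) - r = s - r + b + 1 := by omega
    rw [this]

/-- if `wt(I) = 2s + e` with `e ≥ 1` then for every `b ≥ 1`,
`δ_e^(b)(w) = ∑_{r=0}^{s} C(s+b−1−r, b−1) · (−1)^r · α_r(w)`. -/
theorem deltaIt_eq_sum_alpha
    {I : Type*} [Fintype I] [DecidableEq I] (w : I → ℕ) (s e b : ℕ)
    (hwt : ∑ i, w i = 2 * s + e) (he : 1 ≤ e) (hb : 1 ≤ b) :
    deltaIt w b e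
      = ∑ r ∈ Finset.range (s + 1),
          ((s + b - 1 - r).choose (b - 1) : ℤ) * (-1) ^ r * (alpha w r : ℤ) := by
  obtain ⟨b', rfl⟩ : ∃ b', b = b' + 1 := ⟨b - 1, by omega⟩
  rw [deltaIt_succ_eq w b' s e hwt he]
  refine Finset.sum_congr rfl fun r hr => ?_
  have : s + (b' + 1) - 1 - r = s + b' - r := by omega
  rw [this]
  simp
end

section
/- Let c ≥ 1 and let w₁ ≥ w₂ ≥ ⋯ ≥ w_c be nonnegative integers with w₁ + ⋯ + w_c = 2s + e, where s ∈ ℕ, e ≥ 1, and w₁ ≥ s + 1 (a final position in the majority game). Let M be the position whose elements are w₁, …, w_c. Then e + P(δ_e^(e)(M)) ≥ c; equivalently, if c ≥ e then 2^{c−e} divides δ_e^(e)(M). -/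
open Finset

/-!
With `P = ∏ i, (1 + (-X) ^ w i) = ∑ S, (-X) ^ wt(S)`, the condition `ε(S) ≥ e + 2t` reads
`wt(S) + t ≤ s`, so `δ_{e+2t}` is the coefficient of `X ^ s` in `X ^ t * P / (1 - X)`; each
summation over `t` divides by one more factor `1 - X`, whence `δ_e^(e) = [X ^ s] P / (1 - X) ^ e`.
The factor of the heavy element `w₁ > s` does not affect this coefficient. Every other factor is
`1 + (-X) ^ w = (1 - X) * a + (1 + (-1) ^ w)`, a multiple of `1 - X` plus an even constant.
Expanding the product over the remaining `c - 1` elements, a term with at least `e` factors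
`1 - X` contributes nothing, since after cancelling `(1 - X) ^ e` it has degree `< s`; every other
term carries at least `c - e` factors `2`.
-/

section PowerSeries

open PowerSeries

variable {R : Type*} [CommRing R]

theorem one_sub_pow_mul_invOneSubPow (e : ℕ) :
    (1 - X : R⟦X⟧) ^ e * (invOneSubPow R e).val = 1 := by
  rw [← invOneSubPow_inv_eq_one_sub_pow]
  exact (invOneSubPow R e).inv_val

theorem coeff_mul_invOneSubPow_one (f : R⟦X⟧) {n M : ℕ} (h : n ≤ M) :
    coeff n (f * (invOneSubPow R 1).val) = ∑ i ∈ range (M + 1), coeff n (X ^ i * f) := by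
  have hgeom : ∑ i ∈ range (M + 1), (X : R⟦X⟧) ^ i
      = (1 - X ^ (M + 1)) * (invOneSubPow R 1).val := by
    rw [← mul_neg_geom_sum, mul_comm (1 - X), mul_assoc, ← pow_one (1 - X : R⟦X⟧),
      one_sub_pow_mul_invOneSubPow, mul_one]
  rw [← map_sum, ← sum_mul, hgeom, mul_assoc, sub_mul, one_mul, map_sub, coeff_X_pow_mul',
    if_neg (by omega), sub_zero, mul_comm]

theorem coeff_X_pow_mul_neg_X_pow_mul_invOneSubPow_one (n t m : ℕ) :
    coeff n (X ^ t * (-X) ^ m * (invOneSubPow R 1).val) =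
      if t + m ≤ n then (-1) ^ m else 0 := by
  rw [neg_pow, mul_left_comm, ← pow_add, mul_assoc,
    show ((-1 : R⟦X⟧) ^ m) = C ((-1 : R) ^ m) by simp, coeff_C_mul, coeff_X_pow_mul']
  simp [invOneSubPow_val_succ_eq_mk_add_choose]

theorem coeff_one_add_neg_X_pow_mul {m n : ℕ} (h : n < m) (g : R⟦X⟧) :
    coeff n ((1 + (-X) ^ m) * g) = coeff n g := by
  rw [add_mul, one_mul, map_add, neg_pow', mul_assoc, coeff_X_pow_mul', if_neg (by omega),
    add_zero]

end PowerSeries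

section Polynomial

open Polynomial

variable {R : Type*} [CommRing R]

theorem coeff_coe_mul_invOneSubPow_eq_zero [IsDomain R] {p : R[X]} {s e : ℕ}
    (hdvd : (1 - X) ^ e ∣ p) (hdeg : p.natDegree < s + e) :
    PowerSeries.coeff s ((p : PowerSeries R) * (PowerSeries.invOneSubPow R e).val) = 0 := by
  obtain ⟨q, rfl⟩ := hdvd
  rcases eq_or_ne q 0 with rfl | hq
  · simp
  have hq_deg : q.natDegree < s := by
    have h1X : (1 - X : R[X]).natDegree = 1 := by compute_degree!
    rw [natDegree_mul (pow_ne_zero _ (ne_zero_of_natDegree_gt (h1X ▸ zero_lt_one))) hq,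
      natDegree_pow, h1X] at hdeg
    omega
  rw [Polynomial.coe_mul, mul_comm, ← mul_assoc, Polynomial.coe_pow, Polynomial.coe_sub,
    Polynomial.coe_one, coe_X, mul_comm _ ((1 - PowerSeries.X) ^ e), one_sub_pow_mul_invOneSubPow,
    one_mul, coeff_coe, coeff_eq_zero_of_natDegree_lt hq_deg]

theorem one_sub_X_dvd_sub_C_eval_one (p : R[X]) : 1 - X ∣ p - C (p.eval 1) := by
  rw [← neg_sub, neg_dvd, ← C_1]
  exact X_sub_C_dvd_sub_C_eval

theorem pow_dvd_coeff_coe_prod_mul_invOneSubPow [IsDomain R] {ι : Type*} [DecidableEq ι]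
    (J : Finset ι) (f : ι → R[X]) (d : R) {s e : ℕ} (hd : ∀ i ∈ J, d ∣ (f i).eval 1)
    (hdeg : ∑ i ∈ J, (f i).natDegree < s + e) :
    d ^ (#J + 1 - e) ∣ PowerSeries.coeff s
      ((∏ i ∈ J, f i : R[X]) * (PowerSeries.invOneSubPow R e).val) := by
  set a : ι → R[X] := fun i => f i - C ((f i).eval 1)
  have hexp : ∏ i ∈ J, f i =
      ∑ T ∈ J.powerset, C (∏ i ∈ J \ T, (f i).eval 1) * ∏ i ∈ T, a i := by
    simp_rw [map_prod, mul_comm (∏ i ∈ J \ _, _), ← prod_add]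
    exact prod_congr rfl fun i _ => (sub_add_cancel _ _).symm
  rw [hexp, ← coeToPowerSeries.ringHom_apply, map_sum, sum_mul, map_sum]
  refine dvd_sum fun T hT => ?_
  rw [mem_powerset] at hT
  rw [coeToPowerSeries.ringHom_apply, Polynomial.coe_mul, coe_C, mul_assoc,
    PowerSeries.coeff_C_mul]
  by_cases hTe : #T < e
  · apply Dvd.dvd.mul_right
    calc d ^ (#J + 1 - e) ∣ d ^ #(J \ T) := pow_dvd_pow _ (by rw [card_sdiff_of_subset hT]; omega)
      _ = ∏ i ∈ J \ T, d := (prod_const d).symm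
      _ ∣ _ := prod_dvd_prod_of_dvd _ _ fun i hi => hd i (sdiff_subset hi)
  · have hdvd : (1 - X) ^ e ∣ ∏ i ∈ T, a i :=
      calc (1 - X : R[X]) ^ e ∣ (1 - X) ^ #T := pow_dvd_pow _ (not_lt.mp hTe)
        _ = ∏ i ∈ T, (1 - X) := (prod_const _).symm
        _ ∣ _ := prod_dvd_prod_of_dvd _ _ fun i _ => one_sub_X_dvd_sub_C_eval_one (f i)
    have hdeg_T : (∏ i ∈ T, a i).natDegree < s + e :=
      calc (∏ i ∈ T, a i).natDegree ≤ ∑ i ∈ T, (a i).natDegree := natDegree_prod_le _ _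
        _ = ∑ i ∈ T, (f i).natDegree := sum_congr rfl fun i _ => natDegree_sub_C
        _ ≤ ∑ i ∈ J, (f i).natDegree := sum_le_sum_of_subset hT
        _ < s + e := hdeg
    rw [coeff_coe_mul_invOneSubPow_eq_zero hdvd hdeg_T, mul_zero]
    exact dvd_zero _

end Polynomial

section Delta

open PowerSeries

variable {I : Type*} [Fintype I] [DecidableEq I] (w : I → ℕ) {s e : ℕ}

theorem delta_eq_coeff (hsum : ∑ i, w i = 2 * s + e) (t : ℕ) :
    delta w (e + 2 * t) =
      coeff s (X ^ t * (∏ i, (1 + (-X) ^ w i)) * (invOneSubPow ℤ 1).val) := by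
  rw [prod_one_add, powerset_univ, mul_sum, sum_mul, map_sum, delta, sum_filter]
  refine sum_congr rfl fun S _ => ?_
  have hS : wtS w S + wtS w Sᶜ = 2 * s + e := by rw [wtS, wtS, sum_add_sum_compl, hsum]
  rw [prod_pow_eq_pow_sum, ← wtS, coeff_X_pow_mul_neg_X_pow_mul_invOneSubPow_one]
  split_ifs <;> omega

theorem deltaIt_eq_coeff (hsum : ∑ i, w i = 2 * s + e) (b t : ℕ) :
    deltaIt w (b + 1) (e + 2 * t) =
      coeff s (X ^ t * (∏ i, (1 + (-X) ^ w i)) * (invOneSubPow ℤ (b + 1)).val) := by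
  induction b generalizing t with
  | zero => exact delta_eq_coeff w hsum t
  | succ b ih =>
    calc deltaIt w (b + 2) (e + 2 * t)
        = ∑ t' ∈ range (2 * s + e + 1), coeff s
            (X ^ t' * (X ^ t * (∏ i, (1 + (-X) ^ w i)) * (invOneSubPow ℤ (b + 1)).val)) := by
          rw [deltaIt, hsum]
          refine sum_congr rfl fun t' _ => ?_
          rw [add_assoc, ← mul_add, ih, pow_add, mul_comm (X ^ t), mul_assoc, mul_assoc,
            mul_assoc]
      _ = _ := by
          rw [← coeff_mul_invOneSubPow_one _ (by omega), mul_assoc, ← Units.val_mul,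
            ← invOneSubPow_add]

end Delta

theorem final_position_bound_general
    (c s e : ℕ) (hc : 1 ≤ c) (he : 1 ≤ e)
    (w : Fin c → ℕ)
    (hsum : ∑ i, w i = 2 * s + e)
    (hw1 : s + 1 ≤ w ⟨0, hc⟩) :
    (c : ℕ∞) ≤ (e : ℕ∞) + emultiplicity (2 : ℤ) (deltaIt w e e)
    ∧ (e ≤ c → (2 : ℤ) ^ (c - e) ∣ deltaIt w e e) := by
  set i₀ : Fin c := ⟨0, hc⟩
  set J := univ.erase i₀
  have hδ : deltaIt w e e = PowerSeries.coeff s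
      (((∏ i ∈ J, (1 + (-Polynomial.X) ^ w i) : Polynomial ℤ) : PowerSeries ℤ) *
        (PowerSeries.invOneSubPow ℤ e).val) := by
    have h := deltaIt_eq_coeff w hsum (e - 1) 0
    rw [Nat.sub_add_cancel he, mul_zero, add_zero, pow_zero, one_mul,
      ← mul_prod_erase univ _ (mem_univ i₀), mul_assoc, coeff_one_add_neg_X_pow_mul hw1] at h
    rw [h, ← Polynomial.coeToPowerSeries.ringHom_apply, map_prod]
    simp only [Polynomial.coeToPowerSeries.ringHom_apply, Polynomial.coe_add, Polynomial.coe_one,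
      Polynomial.coe_pow, Polynomial.coe_neg, Polynomial.coe_X, J]
  have heven : ∀ i ∈ J, (2 : ℤ) ∣ (1 + (-Polynomial.X) ^ w i : Polynomial ℤ).eval 1 := by
    intro i _
    rcases neg_one_pow_eq_or ℤ (w i) with h | h <;> simp [h]
  have hdeg : ∑ i ∈ J, (1 + (-Polynomial.X) ^ w i : Polynomial ℤ).natDegree < s + e := by
    have hJ_sum : ∑ i ∈ J, w i + w i₀ = 2 * s + e := by
      rw [sum_erase_add _ _ (mem_univ _), hsum]
    calc _ ≤ ∑ i ∈ J, w i := sum_le_sum fun i _ => by compute_degree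
      _ < s + e := by omega
  have hdvd : (2 : ℤ) ^ (c - e) ∣ deltaIt w e e := by
    have h := pow_dvd_coeff_coe_prod_mul_invOneSubPow J _ 2 heven hdeg
    rwa [card_erase_of_mem (mem_univ _), card_univ, Fintype.card_fin, Nat.sub_add_cancel hc,
      ← hδ] at h
  refine ⟨?_, fun _ => hdvd⟩
  calc (c : ℕ∞) ≤ e + ((c - e : ℕ) : ℕ∞) := by norm_cast; omega
    _ ≤ _ := by gcongr; exact le_emultiplicity_of_pow_dvd hdvd

/-- for a final position `w₁ ≥ … ≥ w_c` with `w₁ + … + w_c = 2s+e`,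
`e ≥ 1` and `w₁ ≥ s+1`, one has `e + P(δ_e^(e)) ≥ c`; equivalently, if `c ≥ e` then
`2^{c−e}` divides `δ_e^(e)`. -/
theorem final_position_bound
    (c s e : ℕ) (hc : 1 ≤ c) (he : 1 ≤ e)
    (w : Fin c → ℕ) (hmono : Antitone w)
    (hsum : ∑ i, w i = 2 * s + e)
    (hw1 : s + 1 ≤ w ⟨0, hc⟩) :
    (c : ℕ∞) ≤ (e : ℕ∞) + emultiplicity (2 : ℤ) (deltaIt w e e)
    ∧ (e ≤ c → (2 : ℤ) ^ (c - e) ∣ deltaIt w e e) :=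
  final_position_bound_general c s e hc he w hsum hw1
end

section
/- Let w : I → ℕ be a position on a finite index set I and suppose i₀ ∈ I satisfies w(i₀) = 0. Let w' be the restriction of w to I∖{i₀}. Then for every e ∈ ℕ and every b ≥ 1, δ_e^(b)(w) = 2 · δ_e^(b)(w'). In particular, removing a zero element from a position decreases P(δ_e^(b)) by exactly 1. -/
open Finset

/-! Since `w i₀ = 0`, the subsets `S` and `insert i₀ S` have the same weight, hence the same
`ε`, so the subsets of `I` pair off and `δ_e(w) = 2 δ_e(w')`. Removing `i₀` also leaves the total
weight, which bounds the sums defining `δ^(b)`, unchanged; the claim for `δ^(b)` follows by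
induction on `b`, and the valuation statement from `P(2r) = P(r) + 1`. -/

theorem emultiplicity_self_mul {α : Type*} [CommMonoidWithZero α] [IsCancelMulZero α] {p : α}
    (hp : Prime p) (a : α) : emultiplicity p (p * a) = emultiplicity p a + 1 := by
  have hpp : emultiplicity p p = 1 := by simpa using emultiplicity_pow_self_of_prime hp 1
  rw [emultiplicity_mul hp, hpp, add_comm]

section SubtypeNe

variable {α M : Type*} [Fintype α] [DecidableEq α] [AddCommMonoid M]

theorem Fintype.sum_eq_sum_subtype_ne_of_eq_zero {f : α → M} {a : α} (ha : f a = 0) :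
    ∑ x, f x = ∑ x : {x // x ≠ a}, f x := by
  rw [← Fintype.sum_equiv (Equiv.optionSubtypeNe a) (fun o => f (Equiv.optionSubtypeNe a o)) f
    fun _ => rfl, Fintype.sum_option]
  simp [ha]

theorem Finset.sum_subtype_ne_eq_sum_powerset_univ_erase (a : α) (F : Finset α → M) :
    ∑ S : Finset {x // x ≠ a}, F (S.map (Function.Embedding.subtype _))
      = ∑ S ∈ (univ.erase a).powerset, F S := by
  have hsub : ∀ T ∈ (univ.erase a).powerset, ∀ x ∈ T, x ≠ a := fun T hT x hx =>
    ne_of_mem_erase (mem_powerset.mp hT hx)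
  refine sum_nbij' (fun S => S.map _) (fun T => T.subtype (· ≠ a))
    (fun S _ => mem_powerset.mpr fun x hx => mem_erase.mpr ⟨S.property_of_mem_map_subtype hx,
      mem_univ x⟩)
    (fun _ _ => mem_univ _)
    (fun S _ => map_injective (Function.Embedding.subtype _)
      (subtype_map_of_mem fun _ => S.property_of_mem_map_subtype))
    (fun T hT => subtype_map_of_mem (hsub T hT)) fun _ _ => rfl

theorem Finset.sum_univ_eq_two_nsmul_sum_subtype_ne (a : α) (F : Finset α → M)
    (hF : ∀ S, a ∉ S → F (insert a S) = F S) :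
    ∑ S, F S = 2 • ∑ S : Finset {x // x ≠ a}, F (S.map (Function.Embedding.subtype _)) := by
  have ha : a ∉ univ.erase a := notMem_erase a univ
  rw [← powerset_univ, ← insert_erase (mem_univ a), sum_powerset_insert ha,
    sum_congr rfl fun S hS => hF S fun h => ha (mem_powerset.mp hS h), ← two_nsmul,
    ← sum_subtype_ne_eq_sum_powerset_univ_erase]

end SubtypeNe

section Position

variable {I : Type*} [Fintype I] [DecidableEq I] (w : I → ℕ)

theorem wtS_map_subtype (p : I → Prop) [DecidablePred p] (S : Finset {x // p x}) :
    wtS w (S.map (Function.Embedding.subtype p)) = wtS (fun x : {x // p x} => w x) S := by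
  simp only [wtS, sum_map, Function.Embedding.coe_subtype]

theorem wtS_compl (S : Finset I) : (wtS w Sᶜ : ℤ) = (∑ i, w i : ℕ) - wtS w S := by
  rw [← sum_compl_add_sum S w, wtS, wtS]
  push_cast
  ring

theorem delta_eq_sum_univ (e : ℕ) :
    delta w e = ∑ S, if (e : ℤ) ≤ (∑ i, w i : ℕ) - 2 * wtS w S then (-1) ^ wtS w S else 0 := by
  rw [delta, sum_filter]
  refine sum_congr rfl fun S _ => ?_
  rw [wtS_compl, sub_sub, ← two_mul]

variable {w} {i₀ : I}

theorem sum_wtS_eq_two_nsmul_of_eq_zero {M : Type*} [AddCommMonoid M] (hi₀ : w i₀ = 0)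
    (g : ℕ → M) :
    ∑ S, g (wtS w S) = 2 • ∑ S, g (wtS (fun x : {x : I // x ≠ i₀} => w x) S) := by
  rw [sum_univ_eq_two_nsmul_sum_subtype_ne i₀ (fun S => g (wtS w S)) fun S hS => by
    rw [wtS, sum_insert hS, hi₀, zero_add, wtS]]
  simp only [wtS_map_subtype]

theorem delta_eq_two_mul_of_eq_zero (hi₀ : w i₀ = 0) (e : ℕ) :
    delta w e = 2 * delta (fun x : {x : I // x ≠ i₀} => w x) e := by
  rw [delta_eq_sum_univ, delta_eq_sum_univ, ← Fintype.sum_eq_sum_subtype_ne_of_eq_zero hi₀]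
  simpa only [nsmul_eq_mul, Nat.cast_ofNat] using sum_wtS_eq_two_nsmul_of_eq_zero hi₀
    fun s : ℕ => if (e : ℤ) ≤ (∑ i, w i : ℕ) - 2 * s then (-1 : ℤ) ^ s else 0

theorem deltaIt_eq_two_mul_of_eq_zero (hi₀ : w i₀ = 0) :
    ∀ b e, deltaIt w b e = 2 * deltaIt (fun x : {x : I // x ≠ i₀} => w x) b e
  | 0, e | 1, e => delta_eq_two_mul_of_eq_zero hi₀ e
  | b + 2, e => by
    rw [deltaIt, deltaIt, ← Fintype.sum_eq_sum_subtype_ne_of_eq_zero hi₀, mul_sum]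
    exact sum_congr rfl fun t _ => deltaIt_eq_two_mul_of_eq_zero hi₀ (b + 1) (e + 2 * t)

end Position

theorem deltaIt_erase_zero_general
    {I : Type*} [Fintype I] [DecidableEq I] (w : I → ℕ)
    (i₀ : I) (hi₀ : w i₀ = 0) (e b : ℕ) :
    deltaIt w b e = 2 * deltaIt (fun x : {x : I // x ≠ i₀} => w x) b e
    ∧ emultiplicity (2 : ℤ) (deltaIt w b e)
        = emultiplicity (2 : ℤ) (deltaIt (fun x : {x : I // x ≠ i₀} => w x) b e) + 1 := by
  have h := deltaIt_eq_two_mul_of_eq_zero hi₀ b e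
  exact ⟨h, h ▸ emultiplicity_self_mul Int.prime_two _⟩

/-- removing an element of weight `0` from a position halves every
statistic `δ_e^(b)` (`b ≥ 1`); in particular it decreases `P(δ_e^(b))` by exactly `1`. -/
theorem deltaIt_erase_zero
    {I : Type*} [Fintype I] [DecidableEq I] (w : I → ℕ)
    (i₀ : I) (hi₀ : w i₀ = 0) (e b : ℕ) (hb : 1 ≤ b) :
    deltaIt w b e = 2 * deltaIt (fun x : {x : I // x ≠ i₀} => w x) b e
    ∧ emultiplicity (2 : ℤ) (deltaIt w b e)
        = emultiplicity (2 : ℤ) (deltaIt (fun x : {x : I // x ≠ i₀} => w x) b e) + 1 :=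
  deltaIt_erase_zero_general w i₀ hi₀ e b
end
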